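/- arXiv:1407.5044 — 4 statements merged into one kernel-verified Lean document; each statement's English description precedes it below -/
import Mathlib

section
/- Assume the scheme F is monotone (hypothesis H1*): for all V, W ∈ ℝ^N, if V ≤ W componentwise then F(V) ≤ F(W) componentwise. Let V ∈ ℝ^N and let ᾱ be a policy attaining the minimum at V, i.e. B(ᾱ)V − c(ᾱ) = F(V). Then every entry of the matrix B(ᾱ) is nonnegative. -/
open Matrix

theorem Monotone.nonneg_of_affine_majorant_eq {ι : Type*} [Fintype ι] [DecidableEq ι]
    {f : (ι → ℝ) → ℝ} (hf : Monotone f) {b : ι → ℝ} {r : ℝ}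
    (hle : ∀ W, f W ≤ b ⬝ᵥ W - r) {V : ι → ℝ} (heq : f V = b ⬝ᵥ V - r) : 0 ≤ b := by
  intro j
  have hbump : f V ≤ f (V + Pi.single j 1) :=
    hf (le_add_of_nonneg_right (Pi.single_nonneg.2 zero_le_one))
  have hmaj := hle (V + Pi.single j 1)
  rw [dotProduct_add, dotProduct_single, mul_one] at hmaj
  simp only [Pi.zero_apply]
  linarith

theorem stmt1_general {N : ℕ} {A : Type*} [Fintype A] [Nonempty A]
    (b : Fin N → A → (Fin N → ℝ)) (r : Fin N → A → ℝ)
    (F : (Fin N → ℝ) → (Fin N → ℝ))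
    (hF : ∀ (V : Fin N → ℝ) (i : Fin N),
      F V i = Finset.univ.inf' Finset.univ_nonempty (fun a : A => b i a ⬝ᵥ V - r i a))
    (hmono : ∀ V W : Fin N → ℝ, (∀ i, V i ≤ W i) → ∀ i, F V i ≤ F W i)
    (V : Fin N → ℝ) (ᾱ : Fin N → A)
    (hopt : ∀ i, b i (ᾱ i) ⬝ᵥ V - r i (ᾱ i) = F V i) :
    ∀ i j, 0 ≤ b i (ᾱ i) j := by
  intro i
  have hmaj : ∀ W, F W i ≤ b i (ᾱ i) ⬝ᵥ W - r i (ᾱ i) := fun W => by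
    rw [hF]
    exact Finset.inf'_le _ (Finset.mem_univ _)
  exact Monotone.nonneg_of_affine_majorant_eq (fun V W hVW => hmono V W hVW i) hmaj
    (hopt i).symm

/-- If the scheme `F(V)_i = min_{a∈A} (b_i(a)·V − r_i(a))` is monotone (H1*)
and `ᾱ` is a policy attaining the minimum at `V`, then every entry of `B(ᾱ)` is
nonnegative. -/
theorem stmt1 {N : ℕ} (hN : 1 ≤ N) {A : Type*} [Fintype A] [Nonempty A]
    (b : Fin N → A → (Fin N → ℝ)) (r : Fin N → A → ℝ)
    (F : (Fin N → ℝ) → (Fin N → ℝ))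
    (hF : ∀ (V : Fin N → ℝ) (i : Fin N),
      F V i = Finset.univ.inf' Finset.univ_nonempty (fun a : A => b i a ⬝ᵥ V - r i a))
    (hmono : ∀ V W : Fin N → ℝ, (∀ i, V i ≤ W i) → ∀ i, F V i ≤ F W i)
    (V : Fin N → ℝ) (ᾱ : Fin N → A)
    (hopt : ∀ i, b i (ᾱ i) ⬝ᵥ V - r i (ᾱ i) = F V i) :
    ∀ i j, 0 ≤ b i (ᾱ i) j :=
  stmt1_general b r F hF hmono V ᾱ hopt
end

section
/- Comparison principle for the discrete Howard problem: let V, W ∈ ℝ^N. Assume (i) for every policy α, B(α)V − c(α) ≥ 0 componentwise (equivalently F(V) ≥ 0), and (ii) there exists a policy β with B(β)W − c(β) ≤ 0 componentwise and B(β) a monotone matrix. Then V ≥ W componentwise. -/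
open Matrix

/-- A square real matrix is monotone if it is invertible and every entry of its
inverse is nonnegative. -/
def IsMonotoneMatrix {N : ℕ} (M : Matrix (Fin N) (Fin N) ℝ) : Prop :=
  IsUnit M ∧ ∀ i j, 0 ≤ M⁻¹ i j

theorem Matrix.mulVec_nonneg {m n R : Type*} [Fintype n] [Semiring R] [PartialOrder R]
    [IsOrderedRing R] {M : Matrix m n R} {x : n → R} (hM : ∀ i j, 0 ≤ M i j) (hx : 0 ≤ x) :
    0 ≤ M *ᵥ x :=
  fun i => Finset.sum_nonneg fun j _ => mul_nonneg (hM i j) (hx j)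

theorem Matrix.nonneg_of_mulVec_nonneg {n R : Type*} [Fintype n] [DecidableEq n] [CommRing R]
    [PartialOrder R] [IsOrderedRing R] {M : Matrix n n R} {x : n → R} (hM : IsUnit M)
    (hM_inv : ∀ i j, 0 ≤ M⁻¹ i j) (hx : 0 ≤ M *ᵥ x) : 0 ≤ x := by
  have hx_eq : x = M⁻¹ *ᵥ (M *ᵥ x) := by
    rw [mulVec_mulVec, nonsing_inv_mul M ((isUnit_iff_isUnit_det M).mp hM), one_mulVec]
  rw [hx_eq]
  exact mulVec_nonneg hM_inv hx

theorem IsMonotoneMatrix.nonneg_of_mulVec_nonneg {N : ℕ} {M : Matrix (Fin N) (Fin N) ℝ}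
    (hM : IsMonotoneMatrix M) {x : Fin N → ℝ} (hx : 0 ≤ M *ᵥ x) : 0 ≤ x :=
  Matrix.nonneg_of_mulVec_nonneg hM.1 hM.2 hx

theorem stmt5_general {N : ℕ} {A : Type*}
    (b : Fin N → A → (Fin N → ℝ)) (r : Fin N → A → ℝ)
    (V W : Fin N → ℝ)
    (hV : ∀ (α : Fin N → A) (i : Fin N), 0 ≤ b i (α i) ⬝ᵥ V - r i (α i))
    (hW : ∃ β : Fin N → A,
      (∀ i, b i (β i) ⬝ᵥ W - r i (β i) ≤ 0) ∧
      IsMonotoneMatrix (Matrix.of fun i j => b i (β i) j)) :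
    ∀ i, W i ≤ V i := by
  obtain ⟨β, hβW, hβ_mono⟩ := hW
  have h_residual : 0 ≤ (Matrix.of fun i j => b i (β i) j) *ᵥ (V - W) := fun i => by
    have h_row : ((Matrix.of fun i j => b i (β i) j) *ᵥ (V - W)) i
        = b i (β i) ⬝ᵥ V - b i (β i) ⬝ᵥ W :=
      dotProduct_sub _ _ _
    rw [Pi.zero_apply, h_row]
    linarith [hV β i, hβW i]
  intro i
  exact sub_nonneg.mp (hβ_mono.nonneg_of_mulVec_nonneg h_residual i)

/-- Comparison principle for the discrete Howard problem: if
`B(α)V − c(α) ≥ 0` for every policy `α`, and there is a policy `β` with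
`B(β)W − c(β) ≤ 0` and `B(β)` monotone, then `V ≥ W` componentwise. -/
theorem stmt5 {N : ℕ} (hN : 1 ≤ N) {A : Type*} [Fintype A] [Nonempty A]
    (b : Fin N → A → (Fin N → ℝ)) (r : Fin N → A → ℝ)
    (V W : Fin N → ℝ)
    (hV : ∀ (α : Fin N → A) (i : Fin N), 0 ≤ b i (α i) ⬝ᵥ V - r i (α i))
    (hW : ∃ β : Fin N → A,
      (∀ i, b i (β i) ⬝ᵥ W - r i (β i) ≤ 0) ∧
      IsMonotoneMatrix (Matrix.of fun i j => b i (β i) j)) :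
    ∀ i, W i ≤ V i :=
  stmt5_general b r V W hV hW
end

section
/- Monotone step of the parallel Howard iteration (lower bound): let V₁, V₂ ∈ ℝ^N. Assume (i) there exists a policy β with B(β)V₁ − c(β, V₁) ≤ 0 componentwise and B(β) a monotone matrix, and (ii) V₂ satisfies min_{a∈A}(b_i(a)·V₂ − r_i(a)(V₁)) = 0 for every component i. Then V₂ ≥ V₁ componentwise. -/
/-!
For the policy `β`, `V₁` is a subsolution of the linear system `B(β) V = c(β, V₁)`, and since the
minimum over controls is `0`, `V₂` is a supersolution of the same system. Hence
`B(β) V₁ ≤ B(β) V₂`, and multiplying by the entrywise nonnegative `B(β)⁻¹` preserves this order.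
-/

open Matrix

theorem Matrix.nonneg_of_nonneg_mulVec {n R : Type*} [Fintype n] [DecidableEq n] [CommRing R]
    [PartialOrder R] [IsOrderedRing R] {M : Matrix n n R} (hM : IsUnit M)
    (hinv : ∀ i j, 0 ≤ M⁻¹ i j) {x : n → R} (hx : 0 ≤ M *ᵥ x) : 0 ≤ x := by
  have hx_eq : x = M⁻¹ *ᵥ (M *ᵥ x) := by
    rw [mulVec_mulVec, nonsing_inv_mul M ((isUnit_iff_isUnit_det M).mp hM), one_mulVec]
  intro i
  rw [hx_eq]
  exact Finset.sum_nonneg fun j _ => mul_nonneg (hinv i j) (hx j)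

theorem IsMonotoneMatrix.le_of_mulVec_le {N : ℕ} {M : Matrix (Fin N) (Fin N) ℝ}
    (hM : IsMonotoneMatrix M) {x y : Fin N → ℝ} (hxy : M *ᵥ x ≤ M *ᵥ y) : x ≤ y :=
  sub_nonneg.mp <| nonneg_of_nonneg_mulVec hM.1 hM.2 <| by rwa [mulVec_sub, sub_nonneg]

theorem stmt7_general {N : ℕ} {A : Type*} [Fintype A] [Nonempty A]
    (b : Fin N → A → (Fin N → ℝ)) (r : Fin N → A → (Fin N → ℝ) → ℝ)
    (V₁ V₂ : Fin N → ℝ)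
    (hβ : ∃ β : Fin N → A,
      (∀ i, b i (β i) ⬝ᵥ V₁ - r i (β i) V₁ ≤ 0) ∧
      IsMonotoneMatrix (Matrix.of fun i j => b i (β i) j))
    (hV₂ : ∀ i : Fin N,
      Finset.univ.inf' Finset.univ_nonempty (fun a : A => b i a ⬝ᵥ V₂ - r i a V₁) = 0) :
    ∀ i, V₁ i ≤ V₂ i := by
  obtain ⟨β, hsub, hmono⟩ := hβ
  refine hmono.le_of_mulVec_le fun i => ?_
  have hsuper : 0 ≤ b i (β i) ⬝ᵥ V₂ - r i (β i) V₁ :=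
    hV₂ i ▸ Finset.inf'_le (fun a => b i a ⬝ᵥ V₂ - r i a V₁) (Finset.mem_univ (β i))
  change b i (β i) ⬝ᵥ V₁ ≤ b i (β i) ⬝ᵥ V₂
  linarith [hsub i]

/-- Monotone step of the parallel Howard iteration (lower bound): if
there is a policy `β` with `B(β)V₁ − c(β,V₁) ≤ 0` componentwise and `B(β)` monotone,
and `V₂` satisfies `min_{a∈A} (b_i(a)·V₂ − r_i(a)(V₁)) = 0` for every `i`, then
`V₂ ≥ V₁` componentwise. -/
theorem stmt7 {N : ℕ} (hN : 1 ≤ N) {A : Type*} [Fintype A] [Nonempty A]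
    (b : Fin N → A → (Fin N → ℝ)) (r : Fin N → A → (Fin N → ℝ) → ℝ)
    (V₁ V₂ : Fin N → ℝ)
    (hβ : ∃ β : Fin N → A,
      (∀ i, b i (β i) ⬝ᵥ V₁ - r i (β i) V₁ ≤ 0) ∧
      IsMonotoneMatrix (Matrix.of fun i j => b i (β i) j))
    (hV₂ : ∀ i : Fin N,
      Finset.univ.inf' Finset.univ_nonempty (fun a : A => b i a ⬝ᵥ V₂ - r i a V₁) = 0) :
    ∀ i, V₁ i ≤ V₂ i :=
  stmt7_general b r V₁ V₂ hβ hV₂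
end

section
/- Doubling of variables, behavior as ε → 0⁺: let K ⊆ ℝ^d be a nonempty compact set, let u, v : K → ℝ be continuous, and for ε > 0 let M_ε = max_{(x,y)∈K×K} Φ_ε(x, y) (which exists by compactness and continuity). Then: (a) M_ε → sup_{x∈K}(u(x) − v(x)) as ε → 0⁺; and (b) for any choice of maximizers (x_ε, y_ε) of Φ_ε over K × K, the penalization term |x_ε − y_ε|²/(2ε) tends to 0 as ε → 0⁺ (in particular |x_ε − y_ε| → 0). Consequently, if liminf_{ε→0⁺} M_ε ≤ 0, then u(x) ≤ v(x) for every x ∈ K. -/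
/-!
Taking `y = x` shows `M ε ≥ S := sup_K (u − v)`, so the penalization is bounded by
`sup u − inf v − S` and `|x_ε − y_ε|² = O(ε)`. Then `u(x_ε) − v(y_ε) ≤ S + v(x_ε) − v(y_ε)`
gives `(M ε − S) + |x_ε − y_ε|²/(2ε) ≤ v(x_ε) − v(y_ε)`, and the right-hand side tends to `0`
by uniform continuity of `v` on `K`; both nonnegative terms on the left are squeezed to `0`.
-/

open Filter Topology Set

theorem UniformContinuousOn.tendsto_dist_comp {α β ι : Type*} [PseudoMetricSpace α]
    [PseudoMetricSpace β] {f : α → β} {s : Set α} (hf : UniformContinuousOn f s)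
    {l : Filter ι} {x y : ι → α} (hx : ∀ᶠ i in l, x i ∈ s) (hy : ∀ᶠ i in l, y i ∈ s)
    (hxy : Tendsto (fun i => dist (x i) (y i)) l (𝓝 0)) :
    Tendsto (fun i => dist (f (x i)) (f (y i))) l (𝓝 0) := by
  rw [← tendsto_uniformity_iff_dist_tendsto_zero (f := fun i => (x i, y i))] at hxy
  rw [← tendsto_uniformity_iff_dist_tendsto_zero (f := fun i => (f (x i), f (y i)))]
  exact Tendsto.comp hf (tendsto_inf.2 ⟨hxy, tendsto_principal.2 (hx.and hy :
    ∀ᶠ i in l, (x i, y i) ∈ s ×ˢ s)⟩)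

theorem tendsto_nhdsGT_zero_of_sq_div_le {r : ℝ → ℝ} {C : ℝ} (hr : ∀ ε, 0 ≤ r ε)
    (h : ∀ ε > 0, r ε ^ 2 / (2 * ε) ≤ C) : Tendsto r (𝓝[>] 0) (𝓝 0) := by
  have hsqrt : Tendsto (fun ε => √(2 * C * ε)) (𝓝[>] 0) (𝓝 0) := by
    have : Continuous fun ε => √(2 * C * ε) := by fun_prop
    exact (this.tendsto' 0 0 (by simp)).mono_left nhdsWithin_le_nhds
  refine tendsto_of_tendsto_of_tendsto_of_le_of_le' tendsto_const_nhds hsqrt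
    (Eventually.of_forall hr) (eventually_mem_nhdsWithin.mono fun ε (hε : 0 < ε) => ?_)
  have := h ε hε
  rw [div_le_iff₀ (by positivity)] at this
  exact Real.le_sqrt_of_sq_le (by linarith)

section Penalization

variable {α : Type*} [PseudoMetricSpace α] {K : Set α} {u v : α → ℝ}

noncomputable def penalized (u v : α → ℝ) (ε : ℝ) (p : α × α) : ℝ :=
  u p.1 - v p.2 - dist p.1 p.2 ^ 2 / (2 * ε)

theorem sSup_sub_le_penalized {ε : ℝ} {p : α × α} (hp : p ∈ K ×ˢ K)
    (hmax : IsMaxOn (penalized u v ε) (K ×ˢ K) p) :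
    sSup ((fun x => u x - v x) '' K) ≤ penalized u v ε p := by
  refine csSup_le ⟨_, mem_image_of_mem _ hp.1⟩ ?_
  rintro _ ⟨x, hx, rfl⟩
  simpa [penalized] using isMaxOn_iff.1 hmax (x, x) ⟨hx, hx⟩

variable {xe ye : ℝ → α}

theorem tendsto_dist_of_isMaxOn_penalized (hK : IsCompact K) (hu : ContinuousOn u K)
    (hv : ContinuousOn v K) (hmem : ∀ ε > 0, (xe ε, ye ε) ∈ K ×ˢ K)
    (hmax : ∀ ε > 0, IsMaxOn (penalized u v ε) (K ×ˢ K) (xe ε, ye ε)) :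
    Tendsto (fun ε => dist (xe ε) (ye ε)) (𝓝[>] 0) (𝓝 0) := by
  obtain ⟨a, ha⟩ := hK.bddAbove_image hu
  obtain ⟨b, hb⟩ := hK.bddBelow_image hv
  refine tendsto_nhdsGT_zero_of_sq_div_le (fun _ => dist_nonneg)
    (C := a - b - sSup ((fun x => u x - v x) '' K)) fun ε hε => ?_
  have hS := sSup_sub_le_penalized (hmem ε hε) (hmax ε hε)
  have hua := ha (mem_image_of_mem u (hmem ε hε).1)
  have hvb := hb (mem_image_of_mem v (hmem ε hε).2)
  simp only [penalized] at hS
  linarith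

theorem tendsto_penalized_of_isMaxOn (hK : IsCompact K) (hu : ContinuousOn u K)
    (hv : ContinuousOn v K) (hmem : ∀ ε > 0, (xe ε, ye ε) ∈ K ×ˢ K)
    (hmax : ∀ ε > 0, IsMaxOn (penalized u v ε) (K ×ˢ K) (xe ε, ye ε)) :
    Tendsto (fun ε => penalized u v ε (xe ε, ye ε)) (𝓝[>] 0)
      (𝓝 (sSup ((fun x => u x - v x) '' K))) ∧
    Tendsto (fun ε => dist (xe ε) (ye ε) ^ 2 / (2 * ε)) (𝓝[>] 0) (𝓝 0) := by
  set S := sSup ((fun x => u x - v x) '' K)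
  have hpos : ∀ᶠ ε in 𝓝[>] (0 : ℝ), 0 < ε := eventually_mem_nhdsWithin
  have hmem_ev : ∀ᶠ ε in 𝓝[>] (0 : ℝ), (xe ε, ye ε) ∈ K ×ˢ K := hpos.mono hmem
  have hgap : ∀ ε > 0, (penalized u v ε (xe ε, ye ε) - S) + dist (xe ε) (ye ε) ^ 2 / (2 * ε)
      ≤ v (xe ε) - v (ye ε) := by
    intro ε hε
    have hxS : u (xe ε) - v (xe ε) ≤ S :=
      le_csSup (hK.bddAbove_image (hu.sub hv)) (mem_image_of_mem _ (hmem ε hε).1)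
    simp only [penalized]
    linarith
  have hvv : Tendsto (fun ε => v (xe ε) - v (ye ε)) (𝓝[>] 0) (𝓝 0) := by
    have := (hK.uniformContinuousOn_of_continuous hv).tendsto_dist_comp
      (hmem_ev.mono fun _ h => h.1) (hmem_ev.mono fun _ h => h.2)
      (tendsto_dist_of_isMaxOn_penalized hK hu hv hmem hmax)
    rw [tendsto_zero_iff_abs_tendsto_zero]
    simpa only [Real.dist_eq, Function.comp_def] using this
  have hS : ∀ ε > 0, 0 ≤ penalized u v ε (xe ε, ye ε) - S := fun ε hε =>
    sub_nonneg.2 (sSup_sub_le_penalized (hmem ε hε) (hmax ε hε))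
  have hpen : ∀ ε > 0, 0 ≤ dist (xe ε) (ye ε) ^ 2 / (2 * ε) := fun ε hε => by positivity
  refine ⟨tendsto_sub_nhds_zero_iff.1 ?_, ?_⟩
  · refine tendsto_of_tendsto_of_tendsto_of_le_of_le' tendsto_const_nhds hvv
      (hpos.mono hS) (hpos.mono fun ε hε => ?_)
    linarith [hgap ε hε, hpen ε hε]
  · refine tendsto_of_tendsto_of_tendsto_of_le_of_le' tendsto_const_nhds hvv
      (hpos.mono hpen) (hpos.mono fun ε hε => ?_)
    linarith [hgap ε hε, hS ε hε]

end Penalization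

theorem stmt14_general {d : ℕ} (K : Set (EuclideanSpace ℝ (Fin d)))
    (hKc : IsCompact K)
    (u v : EuclideanSpace ℝ (Fin d) → ℝ)
    (hu : ContinuousOn u K) (hv : ContinuousOn v K)
    (M : ℝ → ℝ)
    (xe ye : ℝ → EuclideanSpace ℝ (Fin d))
    (hmem : ∀ ε : ℝ, 0 < ε → xe ε ∈ K ∧ ye ε ∈ K)
    (hmax : ∀ ε : ℝ, 0 < ε → ∀ x ∈ K, ∀ y ∈ K,
      u x - v y - ‖x - y‖ ^ 2 / (2 * ε) ≤ M ε)
    (hval : ∀ ε : ℝ, 0 < ε →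
      M ε = u (xe ε) - v (ye ε) - ‖xe ε - ye ε‖ ^ 2 / (2 * ε)) :
    Tendsto M (𝓝[>] (0 : ℝ)) (𝓝 (sSup ((fun x => u x - v x) '' K))) ∧
    Tendsto (fun ε : ℝ => ‖xe ε - ye ε‖ ^ 2 / (2 * ε)) (𝓝[>] (0 : ℝ)) (𝓝 0) ∧
    Tendsto (fun ε : ℝ => ‖xe ε - ye ε‖) (𝓝[>] (0 : ℝ)) (𝓝 0) ∧
    (liminf M (𝓝[>] (0 : ℝ)) ≤ 0 → ∀ x ∈ K, u x ≤ v x) := by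
  have hM : ∀ ε > 0, M ε = penalized u v ε (xe ε, ye ε) := fun ε hε => by
    rw [hval ε hε, penalized, dist_eq_norm]
  have hmaxOn : ∀ ε > 0, IsMaxOn (penalized u v ε) (K ×ˢ K) (xe ε, ye ε) :=
    fun ε hε p hp => by
      rw [← hM ε hε]
      simp only [penalized, dist_eq_norm]
      exact hmax ε hε p.1 hp.1 p.2 hp.2
  obtain ⟨hlimΦ, hpen⟩ := tendsto_penalized_of_isMaxOn hKc hu hv hmem hmaxOn
  have hlimM : Tendsto M (𝓝[>] 0) (𝓝 (sSup ((fun x => u x - v x) '' K))) :=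
    hlimΦ.congr' (eventually_mem_nhdsWithin.mono fun ε hε => (hM ε hε).symm)
  refine ⟨hlimM, by simpa only [dist_eq_norm] using hpen,
    by simpa only [dist_eq_norm] using tendsto_dist_of_isMaxOn_penalized hKc hu hv hmem hmaxOn,
    fun hlim x hx => ?_⟩
  have hS : sSup ((fun x => u x - v x) '' K) ≤ 0 := hlimM.liminf_eq ▸ hlim
  have hxS : u x - v x ≤ sSup ((fun x => u x - v x) '' K) :=
    le_csSup (hKc.bddAbove_image (hu.sub hv)) (mem_image_of_mem _ hx)
  linarith

/-- Doubling of variables, behavior as `ε → 0⁺`: with `K ⊆ ℝ^d` nonempty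
compact, `u, v` continuous on `K`, `M ε = max_{K×K} Φ_ε` and `(xe ε, ye ε)` maximizers
of `Φ_ε(x,y) = u(x) − v(y) − |x−y|²/(2ε)` on `K × K`: (a) `M ε → sup_{x∈K}(u(x)−v(x))`
as `ε → 0⁺`; (b) the penalization `|xe ε − ye ε|²/(2ε) → 0` (hence `|xe ε − ye ε| → 0`)
as `ε → 0⁺`; (c) if `liminf_{ε→0⁺} M ε ≤ 0`, then `u ≤ v` on `K`. -/
theorem stmt14 {d : ℕ} (K : Set (EuclideanSpace ℝ (Fin d)))
    (hKc : IsCompact K) (hKne : K.Nonempty)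
    (u v : EuclideanSpace ℝ (Fin d) → ℝ)
    (hu : ContinuousOn u K) (hv : ContinuousOn v K)
    (M : ℝ → ℝ)
    (xe ye : ℝ → EuclideanSpace ℝ (Fin d))
    (hmem : ∀ ε : ℝ, 0 < ε → xe ε ∈ K ∧ ye ε ∈ K)
    (hmax : ∀ ε : ℝ, 0 < ε → ∀ x ∈ K, ∀ y ∈ K,
      u x - v y - ‖x - y‖ ^ 2 / (2 * ε) ≤ M ε)
    (hval : ∀ ε : ℝ, 0 < ε →
      M ε = u (xe ε) - v (ye ε) - ‖xe ε - ye ε‖ ^ 2 / (2 * ε)) :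
    Tendsto M (𝓝[>] (0 : ℝ)) (𝓝 (sSup ((fun x => u x - v x) '' K))) ∧
    Tendsto (fun ε : ℝ => ‖xe ε - ye ε‖ ^ 2 / (2 * ε)) (𝓝[>] (0 : ℝ)) (𝓝 0) ∧
    Tendsto (fun ε : ℝ => ‖xe ε - ye ε‖) (𝓝[>] (0 : ℝ)) (𝓝 0) ∧
    (liminf M (𝓝[>] (0 : ℝ)) ≤ 0 → ∀ x ∈ K, u x ≤ v x) :=
  stmt14_general K hKc u v hu hv M xe ye hmem hmax hval
end
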